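/- Realizing endomorphisms preserve the dual model space (part of Theorem 1(i)). Let T̃* ⊂ R be the set of power series whose z^γ-coefficient vanishes unless [γ] ≥ 0, and T* ⊂ R the set of power series whose z^γ-coefficient vanishes unless [γ] ≥ 0 or γ = e_𝐧 for some 𝐧 ≠ 0. Let (π^(𝐧))_{𝐧∈ℕ²} be a family of elements of R such that, for each 𝐧, the z^γ-coefficient of π^(𝐧) vanishes unless [γ] ≥ 0 and |γ| > |𝐧|. If Γ is a continuous ℝ-algebra endomorphism of R realizing (π^(𝐧))_{𝐧∈ℕ²}, then Γ(T̃*) ⊆ T̃* and Γ(T*) ⊆ T*. -/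

import Mathlib

open MvPolynomial

abbrev N2 : Type := {p : ℕ × ℕ // p ≠ (0, 0)}
abbrev Idx : Type := ℕ ⊕ N2
abbrev MIdx : Type := Idx →₀ ℕ
abbrev PS : Type := MvPowerSeries Idx ℝ

noncomputable section

/-- the weight `|𝐧| = w₁ n₁ + w₂ n₂` of `𝐧 ∈ ℕ²`. -/
def wt (w₁ w₂ : ℝ) (n : ℕ × ℕ) : ℝ := w₁ * n.1 + w₂ * n.2

/-- `[γ] = Σ_k k γ(k) − Σ_{𝐧≠0} γ(𝐧)`. -/
def brk (γ : MIdx) : ℤ :=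
  γ.sum fun i n =>
    match i with
    | Sum.inl k => (k : ℤ) * n
    | Sum.inr _ => -(n : ℤ)

/-- `Σ_{𝐦≠0} |𝐦| γ(𝐦)`. -/
def wsum (w₁ w₂ : ℝ) (γ : MIdx) : ℝ :=
  γ.sum fun i n =>
    match i with
    | Sum.inl _ => 0
    | Sum.inr m => wt w₁ w₂ m.1 * n

/-- the homogeneity `|γ| = α([γ]+1) + Σ_{𝐧≠0}|𝐧|γ(𝐧)`. -/
def homdeg (α w₁ w₂ : ℝ) (γ : MIdx) : ℝ := α * ((brk γ : ℝ) + 1) + wsum w₁ w₂ γ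

/-! ### operators on monomials (polynomial level) -/

/-- `D^(0) z^γ = Σ_k (k+1) γ(k) z^{γ - e_k + e_{k+1}}`. -/
def D0mono (γ : MIdx) : MvPolynomial Idx ℝ :=
  γ.sum fun i n =>
    match i with
    | Sum.inl k =>
        (((k + 1) * n : ℕ) : ℝ) •
          monomial (γ - Finsupp.single (Sum.inl k) 1 + Finsupp.single (Sum.inl (k + 1)) 1) 1
    | Sum.inr _ => 0

/-- `D^(𝐧) z^γ = ∂_{z_𝐧} z^γ` for `𝐧 ≠ 0`. -/
def DNmono (m : N2) (γ : MIdx) : MvPolynomial Idx ℝ :=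
  ((γ (Sum.inr m) : ℕ) : ℝ) • monomial (γ - Finsupp.single (Sum.inr m) 1) 1

/-- `D^(𝐧) z^γ` for arbitrary `𝐧 ∈ ℕ²`. -/
def Dmono (n : ℕ × ℕ) (γ : MIdx) : MvPolynomial Idx ℝ :=
  if h : n = (0, 0) then D0mono γ else DNmono ⟨n, h⟩ γ

lemma add10_ne (n : ℕ × ℕ) : n + (1, 0) ≠ (0, 0) := by
  intro h
  exact Nat.succ_ne_zero n.1 (congrArg Prod.fst h)

lemma add01_ne (n : ℕ × ℕ) : n + (0, 1) ≠ (0, 0) := by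
  intro h
  exact Nat.succ_ne_zero n.2 (congrArg Prod.snd h)

def v10 : N2 := ⟨(1, 0), by decide⟩
def v01 : N2 := ⟨(0, 1), by decide⟩

/-- `∂₁ z^γ = z_{(1,0)} D^(0) z^γ + Σ_{𝐧≠0} (n₁+1) z_{𝐧+(1,0)} ∂_{z_𝐧} z^γ`. -/
def d1mono (γ : MIdx) : MvPolynomial Idx ℝ :=
  X (Sum.inr v10) * D0mono γ +
    γ.sum fun i n =>
      match i with
      | Sum.inl _ => 0
      | Sum.inr m =>
          (((m.1.1 + 1) * n : ℕ) : ℝ) •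
            monomial
              (γ - Finsupp.single (Sum.inr m) 1 +
                Finsupp.single (Sum.inr ⟨m.1 + (1, 0), add10_ne m.1⟩) 1) 1

/-- `∂₂ z^γ`. -/
def d2mono (γ : MIdx) : MvPolynomial Idx ℝ :=
  X (Sum.inr v01) * D0mono γ +
    γ.sum fun i n =>
      match i with
      | Sum.inl _ => 0
      | Sum.inr m =>
          (((m.1.2 + 1) * n : ℕ) : ℝ) •
            monomial
              (γ - Finsupp.single (Sum.inr m) 1 +
                Finsupp.single (Sum.inr ⟨m.1 + (0, 1), add01_ne m.1⟩) 1) 1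

/-! ### operators on power series (coefficientwise) -/

/-- coefficient of `D^(0) f` at `β`. -/
def D0coeff (f : PS) (β : MIdx) : ℝ :=
  ∑ i ∈ β.support,
    match i with
    | Sum.inl (k + 1) =>
        (((k + 1) * (β (Sum.inl k) + 1) : ℕ) : ℝ) *
          MvPowerSeries.coeff (R := ℝ)
            (β + Finsupp.single (Sum.inl k) 1 - Finsupp.single (Sum.inl (k + 1)) 1) f
    | _ => 0

/-- `D^(0)` on power series. -/
def D0series (f : PS) : PS := D0coeff f

/-- `D^(𝐧) = ∂_{z_𝐧}` on power series, `𝐧 ≠ 0`. -/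
def DNseries (m : N2) (f : PS) : PS :=
  fun β => ((β (Sum.inr m) + 1 : ℕ) : ℝ) *
    MvPowerSeries.coeff (R := ℝ) (β + Finsupp.single (Sum.inr m) 1) f

/-- `D^(𝐧)` on power series for arbitrary `𝐧 ∈ ℕ²`. -/
def Dseries (n : ℕ × ℕ) (f : PS) : PS :=
  if h : n = (0, 0) then D0series f else DNseries ⟨n, h⟩ f

/-- coefficient of `∂₁ f` at `β`. -/
def d1coeff (f : PS) (β : MIdx) : ℝ :=
  (if 1 ≤ β (Sum.inr v10) then D0coeff f (β - Finsupp.single (Sum.inr v10) 1) else 0) +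
    ∑ i ∈ β.support,
      match i with
      | Sum.inl _ => 0
      | Sum.inr p =>
          if hp : ((p.1.1 - 1, p.1.2) : ℕ × ℕ) ≠ (0, 0) ∧ 1 ≤ p.1.1 then
            (p.1.1 : ℝ) *
              ((((β - Finsupp.single (Sum.inr p) 1 : MIdx) (Sum.inr ⟨(p.1.1 - 1, p.1.2), hp.1⟩) : ℕ) + 1 : ℕ) : ℝ) *
              MvPowerSeries.coeff (R := ℝ)
                (β - Finsupp.single (Sum.inr p) 1 +
                  Finsupp.single (Sum.inr ⟨(p.1.1 - 1, p.1.2), hp.1⟩) 1) f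
          else 0

/-- `∂₁` on power series. -/
def d1series (f : PS) : PS := d1coeff f

/-- coefficient of `∂₂ f` at `β`. -/
def d2coeff (f : PS) (β : MIdx) : ℝ :=
  (if 1 ≤ β (Sum.inr v01) then D0coeff f (β - Finsupp.single (Sum.inr v01) 1) else 0) +
    ∑ i ∈ β.support,
      match i with
      | Sum.inl _ => 0
      | Sum.inr p =>
          if hp : ((p.1.1, p.1.2 - 1) : ℕ × ℕ) ≠ (0, 0) ∧ 1 ≤ p.1.2 then
            (p.1.2 : ℝ) *
              ((((β - Finsupp.single (Sum.inr p) 1 : MIdx) (Sum.inr ⟨(p.1.1, p.1.2 - 1), hp.1⟩) : ℕ) + 1 : ℕ) : ℝ) *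
              MvPowerSeries.coeff (R := ℝ)
                (β - Finsupp.single (Sum.inr p) 1 +
                  Finsupp.single (Sum.inr ⟨(p.1.1, p.1.2 - 1), hp.1⟩) 1) f
          else 0

/-- `∂₂` on power series. -/
def d2series (f : PS) : PS := d2coeff f

/-- the operator `z^γ·D^(𝐧)` on power series. -/
def opOf (γ : MIdx) (n : ℕ × ℕ) (f : PS) : PS :=
  MvPowerSeries.monomial (R := ℝ) γ 1 * Dseries n f

/-- the dual model space `T̃*`. -/
def Ttilde : Set PS := {f | ∀ γ : MIdx, MvPowerSeries.coeff (R := ℝ) γ f ≠ 0 → 0 ≤ brk γ}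

/-- the dual model space `T*`. -/
def Tstar : Set PS :=
  {f | ∀ γ : MIdx, MvPowerSeries.coeff (R := ℝ) γ f ≠ 0 →
      0 ≤ brk γ ∨ ∃ m : N2, γ = Finsupp.single (Sum.inr m) 1}

/-! ### topology and the realization property -/

instance : TopologicalSpace PS := inferInstanceAs (TopologicalSpace ((Idx →₀ ℕ) → ℝ))

/-- `Γ` realizes the family `(π^(𝐧))_{𝐧∈ℕ²}`. -/
def Realizes (Γ : PS →ₐ[ℝ] PS) (π : ℕ × ℕ → PS) : Prop :=
  Continuous Γ ∧
    (∀ m : N2, Γ (MvPowerSeries.X (Sum.inr m)) = MvPowerSeries.X (Sum.inr m) + π m.1) ∧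
    (∀ k : ℕ, HasSum
      (fun l : ℕ => ((k + l).choose k : ℝ) • (π (0, 0) ^ l * MvPowerSeries.X (Sum.inl (k + l))))
      (Γ (MvPowerSeries.X (Sum.inl k))))

end

/-!
`Γ` is multiplicative and continuous, so it suffices to control the images of the variables.
Grading monomials by the additive map `γ ↦ [γ]`, the series supported in degrees `≥ c` form a
closed filtration compatible with products. Since `π^(0)` has degree `≥ 0`, every term
`binom(k+l, k) (π^(0))^l z_{k+l}` has degree `≥ k + l ≥ k`, so `Γ z_k` has degree `≥ k = [e_k]`;
and `Γ z_𝐧 = z_𝐧 + π^(𝐧)` has degree `≥ -1 = [e_𝐧]`. Hence `Γ z^γ` has degree `≥ [γ]`, which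
gives `Γ(T̃*) ⊆ T̃*`; for `T*` the only extra monomials are the `z_𝐧`, whose images
`z_𝐧 + π^(𝐧)` lie in `T*`.
-/

namespace MvPowerSeries

open WithPiTopology

variable {σ : Type*} (R : Type*)

section Semiring

variable [Semiring R]

def supportedIn (P : (σ →₀ ℕ) → Prop) : Submodule R (MvPowerSeries σ R) where
  carrier := {f | ∀ γ, coeff γ f ≠ 0 → P γ}
  zero_mem' γ h := absurd (map_zero (coeff γ)) h
  add_mem' {f g} hf hg γ h := by
    by_contra hP
    rw [map_add, not_imp_comm.1 (hf γ) hP, not_imp_comm.1 (hg γ) hP, add_zero] at h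
    exact h rfl
  smul_mem' c f hf γ h := hf γ fun h0 => h (by rw [coeff_smul, h0, mul_zero])

variable {R}

theorem mem_supportedIn {P : (σ →₀ ℕ) → Prop} {f : MvPowerSeries σ R} :
    f ∈ supportedIn R P ↔ ∀ γ, coeff γ f ≠ 0 → P γ :=
  Iff.rfl

theorem supportedIn_mono {P Q : (σ →₀ ℕ) → Prop} (h : ∀ γ, P γ → Q γ) :
    supportedIn R P ≤ supportedIn R Q :=
  fun _ hf γ hγ => h γ (hf γ hγ)

theorem monomial_mem_supportedIn {P : (σ →₀ ℕ) → Prop} {γ : σ →₀ ℕ} (hγ : P γ) (c : R) :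
    monomial γ c ∈ supportedIn R P := by
  classical
  intro β hβ
  rw [coeff_monomial] at hβ
  split_ifs at hβ with h
  · exact h ▸ hγ
  · exact absurd rfl hβ

theorem isClosed_supportedIn [TopologicalSpace R] [T1Space R] (P : (σ →₀ ℕ) → Prop) :
    IsClosed (supportedIn R P : Set (MvPowerSeries σ R)) := by
  have : (supportedIn R P : Set (MvPowerSeries σ R)) =
      ⋂ γ ∈ {γ | ¬ P γ}, coeff γ ⁻¹' {0} := by
    ext f
    simp only [SetLike.mem_coe, mem_supportedIn, Set.mem_iInter, Set.mem_preimage,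
      Set.mem_singleton_iff]
    exact forall_congr' fun γ => not_imp_comm
  rw [this]
  exact isClosed_biInter fun γ _ => isClosed_singleton.preimage (continuous_coeff R γ)

theorem map_mem_of_forall_monomial_mem [TopologicalSpace R]
    (Γ : MvPowerSeries σ R →ₗ[R] MvPowerSeries σ R)
    (hΓ : Continuous Γ) {N : Submodule R (MvPowerSeries σ R)}
    (hN : IsClosed (N : Set (MvPowerSeries σ R)))
    {f : MvPowerSeries σ R} (hf : ∀ γ, coeff γ f ≠ 0 → Γ (monomial γ 1) ∈ N) :
    Γ f ∈ N := by
  have hsum := (hasSum_of_monomials_self f).map Γ.toAddMonoidHom hΓ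
  refine hN.mem_of_tendsto hsum (Filter.Eventually.of_forall fun _ => sum_mem fun γ _ => ?_)
  by_cases hc : coeff γ f = 0
  · simp [hc]
  · have hmon : monomial γ (coeff γ f) = coeff γ f • monomial γ (1 : R) := by
      rw [← map_smul, smul_eq_mul, mul_one]
    simpa [hmon] using N.smul_mem (coeff γ f) (hf γ hc)

end Semiring

section Filtration

variable {M : Type*} [AddCommMonoid M] [PartialOrder M] (deg : (σ →₀ ℕ) →+ M)

def degreeGE [Semiring R] (c : M) : Submodule R (MvPowerSeries σ R) :=
  supportedIn R fun γ => c ≤ deg γ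

variable {R deg}

section Semiring

variable [Semiring R]

theorem degreeGE_antitone {a b : M} (h : a ≤ b) : degreeGE R deg b ≤ degreeGE R deg a :=
  supportedIn_mono fun _ => h.trans

theorem monomial_mem_degreeGE (γ : σ →₀ ℕ) (c : R) : monomial γ c ∈ degreeGE R deg (deg γ) :=
  monomial_mem_supportedIn (P := fun β => deg γ ≤ deg β) le_rfl c

theorem one_mem_degreeGE : (1 : MvPowerSeries σ R) ∈ degreeGE R deg 0 := by
  simpa using monomial_mem_degreeGE (deg := deg) (0 : σ →₀ ℕ) (1 : R)

variable [IsOrderedAddMonoid M]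

theorem mul_mem_degreeGE {a b : M} {f g : MvPowerSeries σ R}
    (hf : f ∈ degreeGE R deg a) (hg : g ∈ degreeGE R deg b) : f * g ∈ degreeGE R deg (a + b) := by
  classical
  intro γ h
  rw [coeff_mul] at h
  obtain ⟨p, hp, hne⟩ := Finset.exists_ne_zero_of_sum_ne_zero h
  rw [← (by simpa using hp : p.1 + p.2 = γ), map_add]
  exact add_le_add (hf p.1 (left_ne_zero_of_mul hne)) (hg p.2 (right_ne_zero_of_mul hne))

theorem pow_mem_degreeGE {a : M} {f : MvPowerSeries σ R} (hf : f ∈ degreeGE R deg a) (n : ℕ) :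
    f ^ n ∈ degreeGE R deg (n • a) := by
  induction n with
  | zero => simpa using one_mem_degreeGE
  | succ n ih => simpa [pow_succ, succ_nsmul] using mul_mem_degreeGE ih hf

end Semiring

theorem map_monomial_one_mem_degreeGE [IsOrderedAddMonoid M] [CommSemiring R]
    (Γ : MvPowerSeries σ R →+* MvPowerSeries σ R)
    (hX : ∀ i, Γ (X i) ∈ degreeGE R deg (deg (Finsupp.single i 1))) (γ : σ →₀ ℕ) :
    Γ (monomial γ 1) ∈ degreeGE R deg (deg γ) := by
  induction γ using Finsupp.induction with
  | zero => simpa using one_mem_degreeGE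
  | single_add i n γ _ _ ih =>
    rw [← one_mul (1 : R), ← monomial_mul_monomial, ← X_pow_eq, map_mul, map_pow, map_add,
      ← Finsupp.smul_single_one, map_nsmul]
    exact mul_mem_degreeGE (pow_mem_degreeGE (hX i) n) ih

end Filtration

end MvPowerSeries

open MvPowerSeries

theorem brk_add (a b : MIdx) : brk (a + b) = brk a + brk b := by
  unfold brk
  rw [Finsupp.sum_add_index']
  · rintro (k | m) <;> simp
  · rintro (k | m) p q <;> push_cast <;> ring

def brkHom : MIdx →+ ℤ where
  toFun := brk
  map_zero' := by simp [brk]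
  map_add' := brk_add

@[simp]
theorem brkHom_apply (γ : MIdx) : brkHom γ = brk γ :=
  rfl

@[simp]
theorem brk_single_inl (k n : ℕ) : brk (Finsupp.single (Sum.inl k) n) = k * n := by
  simp [brk]

@[simp]
theorem brk_single_inr (m : N2) (n : ℕ) : brk (Finsupp.single (Sum.inr m) n) = -n := by
  simp [brk]

namespace Realizes

variable {Γ : PS →ₐ[ℝ] PS} {π : ℕ × ℕ → PS}

theorem map_X_inl_mem (hΓ : Realizes Γ π) (hπ : π (0, 0) ∈ degreeGE ℝ brkHom 0) (k : ℕ) :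
    Γ (X (Sum.inl k)) ∈ degreeGE ℝ brkHom (k : ℤ) := by
  refine (isClosed_supportedIn _).mem_of_tendsto (hΓ.2.2 k)
    (Filter.Eventually.of_forall fun _ => sum_mem fun l _ => Submodule.smul_mem _ _ ?_)
  have hX : (X (Sum.inl (k + l)) : PS) ∈ degreeGE ℝ brkHom ((k + l : ℕ) : ℤ) := by
    simpa [X_def] using
      monomial_mem_degreeGE (deg := brkHom) (Finsupp.single (Sum.inl (k + l)) 1) (1 : ℝ)
  refine degreeGE_antitone ?_ (mul_mem_degreeGE (pow_mem_degreeGE hπ l) hX)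
  simp

theorem map_X_inr_mem (hΓ : Realizes Γ π) (hπ : ∀ m : N2, π m.1 ∈ degreeGE ℝ brkHom 0)
    (m : N2) : Γ (X (Sum.inr m)) ∈ degreeGE ℝ brkHom (-1) := by
  rw [hΓ.2.1 m]
  refine add_mem ?_ (degreeGE_antitone (by norm_num) (hπ m))
  simpa [X_def] using
    monomial_mem_degreeGE (deg := brkHom) (Finsupp.single (Sum.inr m) 1) (1 : ℝ)

theorem map_monomial_one_mem (hΓ : Realizes Γ π) (hπ : ∀ n, π n ∈ degreeGE ℝ brkHom 0)
    (γ : MIdx) : Γ (monomial γ 1) ∈ degreeGE ℝ brkHom (brk γ) := by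
  refine map_monomial_one_mem_degreeGE Γ.toRingHom (fun i => ?_) γ
  rcases i with k | m
  · simpa using hΓ.map_X_inl_mem (hπ _) k
  · simpa using hΓ.map_X_inr_mem (fun m => hπ m.1) m

theorem mapsTo_Ttilde (hΓ : Realizes Γ π) (hπ : ∀ n, π n ∈ degreeGE ℝ brkHom 0) :
    Set.MapsTo Γ Ttilde Ttilde := fun _ hf =>
  map_mem_of_forall_monomial_mem Γ.toLinearMap hΓ.1 (isClosed_supportedIn _) fun γ hγ =>
    degreeGE_antitone (hf γ hγ) (hΓ.map_monomial_one_mem hπ γ)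

theorem mapsTo_Tstar (hΓ : Realizes Γ π) (hπ : ∀ n, π n ∈ degreeGE ℝ brkHom 0) :
    Set.MapsTo Γ Tstar Tstar := by
  have hT : (degreeGE ℝ brkHom 0 : Set PS) ⊆ Tstar := fun f hf γ hγ => Or.inl (hf γ hγ)
  intro f hf
  refine map_mem_of_forall_monomial_mem (N := supportedIn ℝ _) Γ.toLinearMap hΓ.1
    (isClosed_supportedIn _) fun γ hγ => ?_
  rcases hf γ hγ with hγ | ⟨m, rfl⟩
  · exact hT (degreeGE_antitone hγ (hΓ.map_monomial_one_mem hπ γ))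
  · change Γ (monomial _ 1) ∈ Tstar
    rw [← X_def, hΓ.2.1 m]
    exact add_mem (monomial_mem_supportedIn (Or.inr ⟨m, rfl⟩) 1) (hT (hπ m.1))

end Realizes

theorem stmt18_general (α w₁ w₂ : ℝ)
    (π : ℕ × ℕ → PS)
    (hπ : ∀ (n : ℕ × ℕ) (γ : MIdx), MvPowerSeries.coeff (R := ℝ) γ (π n) ≠ 0 →
        0 ≤ brk γ ∧ wt w₁ w₂ n < homdeg α w₁ w₂ γ)
    (Γ : PS →ₐ[ℝ] PS) (hΓ : Realizes Γ π) :
    Set.MapsTo Γ Ttilde Ttilde ∧ Set.MapsTo Γ Tstar Tstar := by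
  have hπ₀ : ∀ n, π n ∈ degreeGE ℝ brkHom 0 := fun n γ hγ => (hπ n γ hγ).1
  exact ⟨hΓ.mapsTo_Ttilde hπ₀, hΓ.mapsTo_Tstar hπ₀⟩

/-- **Realizing endomorphisms preserve the dual model space.** -/
theorem stmt18 (α w₁ w₂ : ℝ) (hα : 0 < α) (hw₁ : 0 < w₁) (hw₂ : 0 < w₂)
    (π : ℕ × ℕ → PS)
    (hπ : ∀ (n : ℕ × ℕ) (γ : MIdx), MvPowerSeries.coeff (R := ℝ) γ (π n) ≠ 0 →
        0 ≤ brk γ ∧ wt w₁ w₂ n < homdeg α w₁ w₂ γ)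
    (Γ : PS →ₐ[ℝ] PS) (hΓ : Realizes Γ π) :
    Set.MapsTo Γ Ttilde Ttilde ∧ Set.MapsTo Γ Tstar Tstar :=
  stmt18_general α w₁ w₂ π hπ Γ hΓ
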